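/- arXiv:1311.0454 — 2 statements merged into one kernel-verified Lean document; each statement's English description precedes it below -/
import Mathlib

section
/- Let V be a real normed vector space and let A be a closed subset of V. If a and b are points of A and the segment [a,b] is not contained in A, then there exist two points x, y in frontier(A) ∩ [a,b] such that the open segment (x,y) is disjoint from A. -/
open Set

theorem segment_escape_frontier
    {V : Type*} [NormedAddCommGroup V] [NormedSpace ℝ V]
    (A : Set V) (hA : IsClosed A) (a b : V) (ha : a ∈ A) (hb : b ∈ A)
    (hseg : ¬ segment ℝ a b ⊆ A) :
    ∃ x y : V, x ∈ frontier A ∩ segment ℝ a b ∧ y ∈ frontier A ∩ segment ℝ a b ∧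
      openSegment ℝ x y ∩ A = ∅ := by
  rw [Set.not_subset] at hseg
  obtain ⟨p, hp_seg, hp_nA⟩ := hseg
  set f : ℝ →ᵃ[ℝ] V := AffineMap.lineMap a b with hf
  have hseg_eq : segment ℝ a b = f '' Icc 0 1 := segment_eq_image_lineMap ℝ a b
  rw [hseg_eq] at hp_seg
  obtain ⟨t0, ht0, hpt0⟩ := hp_seg
  have hcont : Continuous f := AffineMap.lineMap_continuous
  set S : Set ℝ := Icc 0 1 ∩ f ⁻¹' A with hS
  have hSclosed : IsClosed S := isClosed_Icc.inter (hA.preimage hcont)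
  have h0S : (0:ℝ) ∈ S := ⟨⟨le_refl 0, zero_le_one⟩, by simp [hS, hf]; exact ha⟩
  have h1S : (1:ℝ) ∈ S := ⟨⟨zero_le_one, le_refl 1⟩, by simp [hS, hf]; exact hb⟩
  have ht0nS : t0 ∉ S := fun h => hp_nA (by rw [← hpt0]; exact h.2)
  set L := S ∩ Icc 0 t0 with hL
  set R := S ∩ Icc t0 1 with hR
  have hLne : L.Nonempty := ⟨0, h0S, le_refl 0, ht0.1⟩
  have hRne : R.Nonempty := ⟨1, h1S, ht0.2, le_refl 1⟩
  have hLbdd : BddAbove L := ⟨t0, fun x hx => hx.2.2⟩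
  have hRbdd : BddBelow R := ⟨t0, fun x hx => hx.2.1⟩
  set u := sSup L with hu
  set v := sInf R with hv
  have hLclosed : IsClosed L := hSclosed.inter isClosed_Icc
  have hRclosed : IsClosed R := hSclosed.inter isClosed_Icc
  have huL : u ∈ L := hLclosed.csSup_mem hLne hLbdd
  have hvR : v ∈ R := hRclosed.csInf_mem hRne hRbdd
  have hut0 : u < t0 := lt_of_le_of_ne huL.2.2 (fun h : u = t0 => ht0nS (by rw [← h]; exact huL.1))
  have ht0v : t0 < v := lt_of_le_of_ne hvR.2.1 (fun h : t0 = v => ht0nS (by rw [h]; exact hvR.1))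
  have huv : u < v := hut0.trans ht0v
  have hu0 : 0 ≤ u := huL.1.1.1
  have hv1 : v ≤ 1 := hvR.1.1.2
  -- points in open interval are not in A
  have hmid : ∀ t ∈ Ioo u v, f t ∉ A := by
    intro t ht htA
    have ht01 : t ∈ Icc (0:ℝ) 1 := ⟨hu0.trans ht.1.le, ht.2.le.trans hv1⟩
    rcases le_total t t0 with h | h
    · exact absurd (le_csSup hLbdd ⟨⟨ht01, htA⟩, ht01.1, h⟩) (not_le.2 ht.1)
    · exact absurd (csInf_le hRbdd ⟨⟨ht01, htA⟩, h, ht01.2⟩) (not_le.2 ht.2)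
  -- frontier membership
  have hfront : ∀ w ∈ Icc u v, f w ∈ A → w ∈ Icc (0:ℝ) 1 → f w ∈ frontier A ∩ segment ℝ a b := by
    intro w hw hwA hw01
    refine ⟨⟨?_, ?_⟩, hseg_eq ▸ ⟨w, hw01, rfl⟩⟩
    · exact subset_closure hwA
    · rw [← mem_compl_iff, ← closure_compl]
      have h1 : f w ∈ f '' closure (Ioo u v) := by
        rw [closure_Ioo huv.ne]; exact ⟨w, hw, rfl⟩
      have h2 : f '' closure (Ioo u v) ⊆ closure (f '' Ioo u v) :=
        image_closure_subset_closure_image hcont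
      refine closure_mono ?_ (h2 h1)
      rintro _ ⟨t, ht, rfl⟩
      exact hmid t ht
  refine ⟨f u, f v, hfront u ⟨le_refl u, huv.le⟩ huL.1.2 huL.1.1,
    hfront v ⟨huv.le, le_refl v⟩ hvR.1.2 hvR.1.1, ?_⟩
  have : openSegment ℝ (f u) (f v) = f '' Ioo u v := by
    rw [← image_openSegment, openSegment_eq_Ioo huv]
  rw [this, eq_empty_iff_forall_notMem]
  rintro x ⟨⟨t, ht, rfl⟩, hxA⟩
  exact hmid t ht hxA
end

section
/- Let A be a compact subset of EuclideanSpace ℝ (Fin n), let z ∈ ker A, and let v be a nonzero vector. Then there exists t₀ ≥ 0 such that the intersection of the ray {z + t·v : t ≥ 0} with A equals the closed segment [z, z + t₀·v]. -/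
/-- The kernel of `A`: the set of points of `A` that see every point of `A` via `A`. -/
def kernelOf {V : Type*} [AddCommGroup V] [Module ℝ V] (A : Set V) : Set V :=
  {p ∈ A | ∀ x ∈ A, segment ℝ p x ⊆ A}

theorem ray_inter_compact_eq_segment {n : ℕ}
    (A : Set (EuclideanSpace ℝ (Fin n))) (hA : IsCompact A)
    (z : EuclideanSpace ℝ (Fin n)) (hz : z ∈ kernelOf A)
    (v : EuclideanSpace ℝ (Fin n)) (hv : v ≠ 0) :
    ∃ t₀ : ℝ, 0 ≤ t₀ ∧
      {y | ∃ t : ℝ, 0 ≤ t ∧ y = z + t • v} ∩ A = segment ℝ z (z + t₀ • v) := by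
  obtain ⟨hzA, hker⟩ := hz
  set T : Set ℝ := Set.Ici (0:ℝ) ∩ (fun t : ℝ => z + t • v) ⁻¹' A with hTdef
  have h0T : (0:ℝ) ∈ T := ⟨Set.mem_Ici.mpr le_rfl, by simpa using hzA⟩
  have hTne : T.Nonempty := ⟨0, h0T⟩
  have hvpos : 0 < ‖v‖ := norm_pos_iff.mpr hv
  -- segment membership lemma
  have hseg : ∀ s t : ℝ, 0 ≤ s → s ≤ t → z + s • v ∈ segment ℝ z (z + t • v) := by
    intro s t hs hst
    rcases eq_or_lt_of_le (hs.trans hst) with h0 | h0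
    · have hs0 : s = 0 := le_antisymm (hst.trans h0.ge) hs
      rw [hs0, ← h0]
      simp only [zero_smul, add_zero]
      exact left_mem_segment ℝ z z
      -- was: left_mem_segment ℝ z (z + (0:ℝ) • v)
    · refine ⟨1 - s / t, s / t, ?_, ?_, by ring, ?_⟩
      · have : s / t ≤ 1 := (div_le_one h0).mpr hst
        linarith
      · positivity
      · have ht : t ≠ 0 := ne_of_gt h0
        have : (s / t) * t = s := div_mul_cancel₀ s ht
        rw [smul_add, ← add_assoc, ← add_smul, sub_add_cancel, one_smul, smul_smul, this]
  -- downward closedness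
  have hdc : ∀ t ∈ T, ∀ s : ℝ, 0 ≤ s → s ≤ t → z + s • v ∈ A := by
    intro t ht s hs hst
    exact hker (z + t • v) ht.2 (hseg s t hs hst)
  -- T bounded above
  obtain ⟨C, hC⟩ := hA.isBounded.exists_norm_le
  have hbdd : BddAbove T := by
    refine ⟨(C + ‖z‖) / ‖v‖, fun t ht => ?_⟩
    have h1 : ‖z + t • v‖ ≤ C := hC _ ht.2
    have h2 : t * ‖v‖ = ‖t • v‖ := by
      rw [norm_smul, Real.norm_eq_abs, abs_of_nonneg ht.1]
    have h3 : ‖t • v‖ ≤ ‖z + t • v‖ + ‖z‖ := by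
      have := norm_sub_le (z + t • v) z
      simpa using this
    rw [le_div_iff₀ hvpos]
    linarith
  -- T closed
  have hTclosed : IsClosed T := by
    refine isClosed_Ici.inter (hA.isClosed.preimage ?_)
    exact (continuous_const.add (continuous_id.smul continuous_const))
  set t₀ := sSup T with ht₀def
  have ht₀T : t₀ ∈ T := hTclosed.csSup_mem hTne hbdd
  refine ⟨t₀, ht₀T.1, ?_⟩
  ext y
  constructor
  · rintro ⟨⟨t, ht0, rfl⟩, hyA⟩
    exact hseg t t₀ ht0 (le_csSup hbdd ⟨ht0, hyA⟩)
  · rintro ⟨a, b, ha, hb, hab, rfl⟩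
    have hb1 : b ≤ 1 := by linarith
    have heq : a • z + b • (z + t₀ • v) = z + (b * t₀) • v := by
      have ha' : a = 1 - b := by linarith
      rw [ha', smul_add, ← add_assoc, ← add_smul, sub_add_cancel, one_smul, smul_smul]
    rw [heq]
    refine ⟨⟨b * t₀, mul_nonneg hb ht₀T.1, rfl⟩, ?_⟩
    exact hdc t₀ ht₀T _ (mul_nonneg hb ht₀T.1)
      (mul_le_of_le_one_left ht₀T.1 hb1)
end
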